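/- Let K be a commutative ℚ-algebra, A a finite set, R = K[[t^a_k : a ∈ A, k ∈ ℕ]] the ring of formal power series in the variables t^a_k, and J ⊆ R the ideal generated by {t^a_k : a ∈ A, k ≥ 1}. Suppose F, Φ ∈ R satisfy F ≡ Φ modulo J, and suppose there are elements A^{b,n}_a ∈ R (a, b ∈ A, n ≥ 1) such that both F and Φ satisfy the same system of equations ∂X/∂t^b_n = ∑_{a∈A} A^{b,n}_a · ∂X/∂t^a_0 for all b ∈ A and n ≥ 1. Then F = Φ. -/

import Mathlib

/-- The coefficientwise partial derivative `∂/∂t_s` on multivariate formal power series. -/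
noncomputable def pderivPS {σ : Type*} {K : Type*} [CommSemiring K] (s : σ)
    (f : MvPowerSeries σ K) : MvPowerSeries σ K :=
  fun d => (d s + 1) • MvPowerSeries.coeff (d + Finsupp.single s 1) f

/-- Membership in the (completed) ideal `J ⊆ R = K[[t^a_k : a ∈ A, k ∈ ℕ]]` generated by
the variables `t^a_k` with `k ≥ 1` (the variable `t^a_k` being the one indexed by
`(a, k) : A × ℕ`): a formal power series lies in `J` iff its coefficient at every
monomial involving only the variables `t^a_0` vanishes. -/
def memJ {K : Type*} [CommSemiring K] {A : Type*} (f : MvPowerSeries (A × ℕ) K) : Prop :=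
  ∀ d : (A × ℕ) →₀ ℕ, (∀ p ∈ d.support, p.2 = 0) → MvPowerSeries.coeff d f = 0

lemma coeff_pderivPS {σ K : Type*} [CommSemiring K] (s : σ) (f : MvPowerSeries σ K)
    (d : σ →₀ ℕ) :
    MvPowerSeries.coeff d (pderivPS s f)
      = (d s + 1) • MvPowerSeries.coeff (d + Finsupp.single s 1) f := rfl

lemma pderivPS_sub {σ K : Type*} [CommRing K] (s : σ) (f g : MvPowerSeries σ K) :
    pderivPS s (f - g) = pderivPS s f - pderivPS s g := by
  ext d
  simp only [map_sub, coeff_pderivPS, smul_sub]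

/-- The total weight `∑ d_{(a,k)} · k` of a monomial. -/
def wtAux {A : Type*} (d : (A × ℕ) →₀ ℕ) : ℕ := d.sum fun p k => k * p.2

lemma wtAux_add {A : Type*} (d e : (A × ℕ) →₀ ℕ) : wtAux (d + e) = wtAux d + wtAux e :=
  Finsupp.sum_add_index' (fun p => zero_mul p.2) (fun p k₁ k₂ => add_mul k₁ k₂ p.2)

lemma wtAux_single {A : Type*} (p : A × ℕ) : wtAux (Finsupp.single p 1) = p.2 := by
  simp [wtAux, Finsupp.sum_single_index]

lemma wtAux_eq_zero {A : Type*} {d : (A × ℕ) →₀ ℕ} (h : wtAux d = 0) :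
    ∀ p ∈ d.support, p.2 = 0 := by
  intro p hp
  have h0 : d p * p.2 = 0 := by
    have := (Finset.sum_eq_zero_iff (s := d.support)
      (f := fun p => d p * p.2)).1 h p hp
    exact this
  have hdp : d p ≠ 0 := Finsupp.mem_support_iff.1 hp
  exact mul_eq_zero.1 (by rwa [Nat.mul_comm] at h0) |>.elim
    (fun h => h) (fun h => absurd h hdp)

/-- Uniqueness from a first-order system: if `F ≡ Φ (mod J)` and `F` and `Φ` satisfy the
same system `∂X/∂t^b_n = ∑_a A^{b,n}_a ∂X/∂t^a_0` for all `b ∈ A`, `n ≥ 1`, then `F = Φ`. -/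
theorem uniqueness_from_first_order_system
    {K : Type*} [CommRing K] [Algebra ℚ K] {A : Type*} [Fintype A]
    (F Φ : MvPowerSeries (A × ℕ) K)
    (hFΦ : memJ (F - Φ))
    (c : A → ℕ → A → MvPowerSeries (A × ℕ) K)
    (hF : ∀ (b : A) (n : ℕ), 1 ≤ n →
      pderivPS (b, n) F = ∑ a : A, c b n a * pderivPS (a, 0) F)
    (hΦ : ∀ (b : A) (n : ℕ), 1 ≤ n →
      pderivPS (b, n) Φ = ∑ a : A, c b n a * pderivPS (a, 0) Φ) :
    F = Φ := by
  classical
  set G := F - Φ with hGdef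
  have hG : ∀ (b : A) (n : ℕ), 1 ≤ n →
      pderivPS (b, n) G = ∑ a : A, c b n a * pderivPS (a, 0) G := by
    intro b n hn
    rw [hGdef, pderivPS_sub, hF b n hn, hΦ b n hn, ← Finset.sum_sub_distrib]
    refine Finset.sum_congr rfl fun a _ => ?_
    rw [pderivPS_sub, mul_sub]
  have key : ∀ (N : ℕ) (d : (A × ℕ) →₀ ℕ), wtAux d ≤ N → MvPowerSeries.coeff d G = 0 := by
    intro N
    induction N with
    | zero =>
      intro d hd
      exact hFΦ d (wtAux_eq_zero (Nat.le_zero.1 hd))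
    | succ N ih =>
      intro d hd
      by_cases hbase : ∀ p ∈ d.support, p.2 = 0
      · exact hFΦ d hbase
      · push_neg at hbase
        obtain ⟨⟨b, n⟩, hp, hn0⟩ := hbase
        have hn : 1 ≤ n := Nat.one_le_iff_ne_zero.2 hn0
        have hd1 : 1 ≤ d (b, n) := Nat.one_le_iff_ne_zero.2 (Finsupp.mem_support_iff.1 hp)
        set e : (A × ℕ) →₀ ℕ := d - Finsupp.single (b, n) 1 with he
        have hde : e + Finsupp.single (b, n) 1 = d :=
          tsub_add_cancel_of_le (Finsupp.single_le_iff.2 hd1)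
        have hwt : wtAux e + n = wtAux d := by
          have := wtAux_add e (Finsupp.single (b, n) 1)
          rw [hde, wtAux_single] at this
          omega
        have h1 : MvPowerSeries.coeff e (pderivPS (b, n) G)
            = (d (b, n)) • MvPowerSeries.coeff d G := by
          rw [coeff_pderivPS, hde]
          congr 1
          have : e (b, n) = d (b, n) - 1 := by
            rw [he, Finsupp.tsub_apply, Finsupp.single_apply, if_pos rfl]
          omega
        have h2 : MvPowerSeries.coeff e (∑ a : A, c b n a * pderivPS (a, 0) G) = 0 := by
          rw [map_sum]
          refine Finset.sum_eq_zero fun a _ => ?_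
          rw [MvPowerSeries.coeff_mul]
          refine Finset.sum_eq_zero fun uv huv => ?_
          rw [coeff_pderivPS]
          have hsum : wtAux uv.1 + wtAux uv.2 = wtAux e := by
            rw [← wtAux_add, Finset.HasAntidiagonal.mem_antidiagonal.1 huv]
          have hv : wtAux (uv.2 + Finsupp.single (a, 0) 1) ≤ N := by
            rw [wtAux_add, wtAux_single]
            simp only
            omega
          rw [ih _ hv, smul_zero, mul_zero]
        have h3 : (d (b, n)) • MvPowerSeries.coeff d G = 0 := by
          rw [← h1, hG b n hn, h2]
        have hq : ((d (b, n) : ℚ)) ≠ 0 := by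
          exact Nat.cast_ne_zero.2 (by omega)
        have h4 : ((d (b, n) : ℚ)) • MvPowerSeries.coeff d G = 0 := by
          rw [Nat.cast_smul_eq_nsmul]; exact h3
        have : MvPowerSeries.coeff d G
            = ((d (b, n) : ℚ)⁻¹ * (d (b, n) : ℚ)) • MvPowerSeries.coeff d G := by
          rw [inv_mul_cancel₀ hq, one_smul]
        rw [this, mul_smul, h4, smul_zero]
  have hzero : G = 0 := by
    ext d
    rw [map_zero]
    exact key (wtAux d) d le_rfl
  have := sub_eq_zero.1 hzero
  exact this
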